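/- arXiv:2206.10479 — 8 statements merged into one kernel-verified Lean document; each statement's English description precedes it below -/
import Mathlib

section
/- The regret of policy π relative to policy ϖ under the asymmetric utility u(d; y1, y0) with parameters u_g, u_l, and common cost c equals V(ϖ) - V(π) = E[(ϖ(X) - π(X))·(u_g·τ(X) + (u_g - u_l)·e_{01}(X) - c)]. -/
/-!
The value of a policy is affine in the treatment probability at each `x`, with slope the
expected utility gain of treating; under the asymmetric utility that gain is
`u_g e₁₀ - u_l e₀₁ - c = u_g τ + (u_g - u_l) e₀₁ - c`, since the strata probabilities sum to one.
-/

open MeasureTheory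

namespace PolicyRegret

def treatmentGain (e : Bool → Bool → ℝ) (u : Bool → Bool → Bool → ℝ) : ℝ :=
  ∑ y1 : Bool, ∑ y0 : Bool, e y1 y0 * (u true y1 y0 - u false y1 y0)

theorem sum_value_sub_sum_value (e : Bool → Bool → ℝ) (u : Bool → Bool → Bool → ℝ) (p q : ℝ) :
    (∑ y1 : Bool, ∑ y0 : Bool, e y1 y0 * (u false y1 y0 * (1 - q) + u true y1 y0 * q))
      - (∑ y1 : Bool, ∑ y0 : Bool, e y1 y0 * (u false y1 y0 * (1 - p) + u true y1 y0 * p))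
      = (q - p) * treatmentGain e u := by
  simp only [treatmentGain, Fintype.sum_bool]
  ring

theorem treatmentGain_eq (e : Bool → Bool → ℝ) (u : Bool → Bool → Bool → ℝ) (ug ul c : ℝ)
    (hsum : e true true + e true false + e false true + e false false = 1)
    (huseful : u true true false - u false true false = ug - c)
    (hharmful : u true false true - u false false true = -ul - c)
    (hharmless : u true true true - u false true true = -c)
    (huseless : u true false false - u false false false = -c) :
    treatmentGain e u = ug * (e true false - e false true) + (ug - ul) * e false true - c := by
  simp only [treatmentGain, Fintype.sum_bool, huseful, hharmful, hharmless, huseless]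
  linear_combination (-c) * hsum

end PolicyRegret

open PolicyRegret in
theorem stmt3_general {𝓧 : Type*} [MeasurableSpace 𝓧] (ν : Measure 𝓧)
    (e : Bool → Bool → 𝓧 → ℝ)
    (hsum : ∀ x, e true true x + e true false x + e false true x + e false false x = 1)
    (u : Bool → Bool → Bool → ℝ) (ug ul c : ℝ)
    (huseful : u true true false - u false true false = ug - c)
    (hharmful : u true false true - u false false true = -ul - c)
    (hharmless : u true true true - u false true true = -c)
    (huseless : u true false false - u false false false = -c)
    (τ : 𝓧 → ℝ)
    (hτ : ∀ x, τ x = (e true true x + e true false x) - (e true true x + e false true x))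
    (π ϖ : 𝓧 → ℝ)
    (hIntπ : Integrable (fun x => ∑ y1 : Bool, ∑ y0 : Bool,
      e y1 y0 x * (u false y1 y0 * (1 - π x) + u true y1 y0 * π x)) ν)
    (hIntϖ : Integrable (fun x => ∑ y1 : Bool, ∑ y0 : Bool,
      e y1 y0 x * (u false y1 y0 * (1 - ϖ x) + u true y1 y0 * ϖ x)) ν) :
    (∫ x, ∑ y1 : Bool, ∑ y0 : Bool,
        e y1 y0 x * (u false y1 y0 * (1 - ϖ x) + u true y1 y0 * ϖ x) ∂ν)
      - (∫ x, ∑ y1 : Bool, ∑ y0 : Bool,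
        e y1 y0 x * (u false y1 y0 * (1 - π x) + u true y1 y0 * π x) ∂ν)
      = ∫ x, (ϖ x - π x) * (ug * τ x + (ug - ul) * e false true x - c) ∂ν := by
  rw [← integral_sub hIntϖ hIntπ]
  refine integral_congr_ae (Filter.Eventually.of_forall fun x => ?_)
  dsimp only
  rw [sum_value_sub_sum_value (e · · x),
    treatmentGain_eq (e · · x) u ug ul c (hsum x) huseful hharmful hharmless huseless, hτ x]
  ring

theorem stmt3 {𝓧 : Type*} [MeasurableSpace 𝓧] (ν : Measure 𝓧) [IsProbabilityMeasure ν]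
    (e : Bool → Bool → 𝓧 → ℝ)
    (hpos : ∀ y1 y0 x, 0 ≤ e y1 y0 x)
    (hsum : ∀ x, e true true x + e true false x + e false true x + e false false x = 1)
    (u : Bool → Bool → Bool → ℝ) (ug ul c : ℝ)
    (hug : 0 < ug) (hul : 0 < ul) (hc : 0 ≤ c)
    (huseful : u true true false - u false true false = ug - c)
    (hharmful : u true false true - u false false true = -ul - c)
    (hharmless : u true true true - u false true true = -c)
    (huseless : u true false false - u false false false = -c)
    (τ : 𝓧 → ℝ)
    (hτ : ∀ x, τ x = (e true true x + e true false x) - (e true true x + e false true x))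
    (π ϖ : 𝓧 → ℝ) (hπ : ∀ x, π x = 0 ∨ π x = 1) (hϖ : ∀ x, ϖ x = 0 ∨ ϖ x = 1)
    (hIntπ : Integrable (fun x => ∑ y1 : Bool, ∑ y0 : Bool,
      e y1 y0 x * (u false y1 y0 * (1 - π x) + u true y1 y0 * π x)) ν)
    (hIntϖ : Integrable (fun x => ∑ y1 : Bool, ∑ y0 : Bool,
      e y1 y0 x * (u false y1 y0 * (1 - ϖ x) + u true y1 y0 * ϖ x)) ν)
    (hIntR : Integrable (fun x =>
      (ϖ x - π x) * (ug * τ x + (ug - ul) * e false true x - c)) ν) :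
    (∫ x, ∑ y1 : Bool, ∑ y0 : Bool,
        e y1 y0 x * (u false y1 y0 * (1 - ϖ x) + u true y1 y0 * ϖ x) ∂ν)
      - (∫ x, ∑ y1 : Bool, ∑ y0 : Bool,
        e y1 y0 x * (u false y1 y0 * (1 - π x) + u true y1 y0 * π x) ∂ν)
      = ∫ x, (ϖ x - π x) * (ug * τ x + (ug - ul) * e false true x - c) ∂ν :=
  stmt3_general ν e hsum u ug ul c huseful hharmful hharmless huseless τ hτ π ϖ hIntπ hIntϖ
end

section
/- For any deterministic policy π and b(x) = u_g τ(x) + (u_g - u_l) e(x) - c, with e(x) ranging over [L(x), U(x)]: the worst-case regret relative to the never-treat policy is max_{e ∈ [L,U]} E[-π(X) b(X)] = -E[π(X) L_b(X)], and relative to the always-treat policy is E[(1-π(X)) U_b(X)], where L_b(x) = min_{e∈[L(x),U(x)]} b(x) and U_b(x) = max_{e∈[L(x),U(x)]} b(x). Consequently the unconstrained minimax policies are π*_O(x) = 1{L_b(x) ≥ 0} and π*_1(x) = 1{U_b(x) ≥ 0}. -/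
open MeasureTheory Set

/-- Pointwise lower envelope of `e ↦ u_g τ(x) + (u_g - u_l) e - c` over the
Fréchet interval `[L(x), U(x)]`. -/
noncomputable def Lb {α : Type*} (ug ul c : ℝ) (τ L U : α → ℝ) (x : α) : ℝ :=
  sInf ((fun e => ug * τ x + (ug - ul) * e - c) '' Icc (L x) (U x))

/-- Pointwise upper envelope of `e ↦ u_g τ(x) + (u_g - u_l) e - c` over the
Fréchet interval `[L(x), U(x)]`. -/
noncomputable def Ub {α : Type*} (ug ul c : ℝ) (τ L U : α → ℝ) (x : α) : ℝ :=
  sSup ((fun e => ug * τ x + (ug - ul) * e - c) '' Icc (L x) (U x))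

/-! The benefit `b = u_g τ + (u_g - u_l) e - c` is affine in the principal score `e`, so on
`[L x, U x]` it is extremal at an endpoint chosen by the sign of the slope `u_g - u_l`; these
endpoints form measurable selections at which the worst-case regrets are attained. Minimising
the regrets `-∫ π Lb` and `∫ (1 - π) Ub` over policies is then a pointwise problem, solved by
treating exactly where the envelope is nonnegative. -/

section Envelope

variable {α : Type*} {ug ul c : ℝ} {τ L U : α → ℝ}

variable (ug ul L U) in
noncomputable def lbSelection (x : α) : ℝ := if 0 ≤ ug - ul then L x else U x

variable (ug ul L U) in
noncomputable def ubSelection (x : α) : ℝ := if 0 ≤ ug - ul then U x else L x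

theorem measurable_lbSelection [MeasurableSpace α] (hL : Measurable L) (hU : Measurable U) :
    Measurable (lbSelection ug ul L U) := by
  unfold lbSelection; split_ifs <;> assumption

theorem measurable_ubSelection [MeasurableSpace α] (hL : Measurable L) (hU : Measurable U) :
    Measurable (ubSelection ug ul L U) := by
  unfold ubSelection; split_ifs <;> assumption

theorem lbSelection_mem_Icc {x : α} (h : L x ≤ U x) :
    lbSelection ug ul L U x ∈ Icc (L x) (U x) := by
  unfold lbSelection; split_ifs
  exacts [left_mem_Icc.2 h, right_mem_Icc.2 h]

theorem ubSelection_mem_Icc {x : α} (h : L x ≤ U x) :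
    ubSelection ug ul L U x ∈ Icc (L x) (U x) := by
  unfold ubSelection; split_ifs
  exacts [right_mem_Icc.2 h, left_mem_Icc.2 h]

theorem monotone_affine {a s : ℝ} (hs : 0 ≤ s) : Monotone fun e : ℝ => a + s * e - c :=
  fun _ _ h => by dsimp only; gcongr

theorem antitone_affine {a s : ℝ} (hs : s ≤ 0) : Antitone fun e : ℝ => a + s * e - c :=
  fun _ _ h => by dsimp only; nlinarith

theorem isLeast_image_Icc_lbSelection {x : α} (h : L x ≤ U x) :
    IsLeast ((fun e => ug * τ x + (ug - ul) * e - c) '' Icc (L x) (U x))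
      (ug * τ x + (ug - ul) * lbSelection ug ul L U x - c) := by
  unfold lbSelection; split_ifs with hs
  · exact (monotone_affine hs).map_isLeast (isLeast_Icc h)
  · exact (antitone_affine (not_le.1 hs).le).map_isGreatest (isGreatest_Icc h)

theorem isGreatest_image_Icc_ubSelection {x : α} (h : L x ≤ U x) :
    IsGreatest ((fun e => ug * τ x + (ug - ul) * e - c) '' Icc (L x) (U x))
      (ug * τ x + (ug - ul) * ubSelection ug ul L U x - c) := by
  unfold ubSelection; split_ifs with hs
  · exact (monotone_affine hs).map_isGreatest (isGreatest_Icc h)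
  · exact (antitone_affine (not_le.1 hs).le).map_isLeast (isLeast_Icc h)

theorem Lb_eq {x : α} (h : L x ≤ U x) :
    Lb ug ul c τ L U x = ug * τ x + (ug - ul) * lbSelection ug ul L U x - c :=
  (isLeast_image_Icc_lbSelection h).csInf_eq

theorem Ub_eq {x : α} (h : L x ≤ U x) :
    Ub ug ul c τ L U x = ug * τ x + (ug - ul) * ubSelection ug ul L U x - c :=
  (isGreatest_image_Icc_ubSelection h).csSup_eq

theorem Lb_le {x : α} {e : ℝ} (he : e ∈ Icc (L x) (U x)) :
    Lb ug ul c τ L U x ≤ ug * τ x + (ug - ul) * e - c := by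
  rw [Lb_eq (he.1.trans he.2)]
  exact (isLeast_image_Icc_lbSelection (he.1.trans he.2)).2 ⟨e, he, rfl⟩

theorem le_Ub {x : α} {e : ℝ} (he : e ∈ Icc (L x) (U x)) :
    ug * τ x + (ug - ul) * e - c ≤ Ub ug ul c τ L U x := by
  rw [Ub_eq (he.1.trans he.2)]
  exact (isGreatest_image_Icc_ubSelection (he.1.trans he.2)).2 ⟨e, he, rfl⟩

end Envelope

section Integral

variable {α ι : Type*} [MeasurableSpace α] {μ : Measure α}

theorem ciSup_integral_eq_of_ae_le (f : ι → α → ℝ) (hf : ∀ i, Integrable (f i) μ)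
    {g : α → ℝ} (i₀ : ι) (hi₀ : f i₀ = g) (hle : ∀ i, f i ≤ᵐ[μ] g) :
    ⨆ i, ∫ x, f i x ∂μ = ∫ x, g x ∂μ := by
  have : Nonempty ι := ⟨i₀⟩
  have hmono : ∀ i, ∫ x, f i x ∂μ ≤ ∫ x, g x ∂μ := fun i =>
    integral_mono_ae (hf i) (hi₀ ▸ hf i₀) (hle i)
  refine le_antisymm (ciSup_le hmono) ?_
  rw [← hi₀]
  exact le_ciSup ⟨_, forall_mem_range.2 (hi₀ ▸ hmono)⟩ i₀

theorem MeasureTheory.Integrable.mul_of_mem_Icc {w v : α → ℝ} (hv : Integrable v μ)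
    (hw : AEStronglyMeasurable w μ) (hw01 : ∀ x, w x ∈ Icc 0 1) :
    Integrable (fun x => w x * v x) μ :=
  hv.bdd_mul hw (c := 1) (.of_forall fun x => by
    rw [Real.norm_eq_abs, abs_of_nonneg (hw01 x).1]; exact (hw01 x).2)

theorem ite_nonneg_mul_self_eq_max_zero (v : ℝ) :
    (if 0 ≤ v then (1 : ℝ) else 0) * v = max v 0 := by
  split_ifs with h
  · rw [one_mul, max_eq_left h]
  · rw [zero_mul, max_eq_right (not_le.1 h).le]

theorem one_sub_ite_nonneg_mul_self_eq_min_zero (v : ℝ) :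
    (1 - if 0 ≤ v then (1 : ℝ) else 0) * v = min v 0 := by
  split_ifs with h
  · rw [sub_self, zero_mul, min_eq_right h]
  · rw [sub_zero, one_mul, min_eq_left (not_le.1 h).le]

theorem integral_mul_le_integral_max_zero {w v : α → ℝ} (hv : Integrable v μ)
    (hw : AEStronglyMeasurable w μ) (hw01 : ∀ x, w x ∈ Icc 0 1) :
    ∫ x, w x * v x ∂μ ≤ ∫ x, max (v x) 0 ∂μ :=
  integral_mono (hv.mul_of_mem_Icc hw hw01) hv.pos_part fun x => by
    have := hw01 x
    rcases le_total 0 (v x) with h | h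
    · rw [max_eq_left h]; exact mul_le_of_le_one_left h this.2
    · rw [max_eq_right h]; exact mul_nonpos_of_nonneg_of_nonpos this.1 h

theorem integral_min_zero_le_integral_mul {w v : α → ℝ} (hv : Integrable v μ)
    (hw : AEStronglyMeasurable w μ) (hw01 : ∀ x, w x ∈ Icc 0 1) :
    ∫ x, min (v x) 0 ∂μ ≤ ∫ x, w x * v x ∂μ :=
  integral_mono (hv.inf (integrable_zero α ℝ μ)) (hv.mul_of_mem_Icc hw hw01) fun x => by
    have := hw01 x
    rcases le_total 0 (v x) with h | h
    · rw [min_eq_right h]; exact mul_nonneg this.1 h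
    · rw [min_eq_left h]; exact le_mul_of_le_one_left h this.2

end Integral

section Regret

variable {α : Type*} [MeasurableSpace α] {μ : Measure α} [IsFiniteMeasure μ]
  {ug ul c : ℝ} {τ L U w : α → ℝ}

abbrev Selection (L U : α → ℝ) : Type _ :=
  {e : α → ℝ // Measurable e ∧ ∀ x, e x ∈ Icc (L x) (U x)}

theorem integrable_benefit (hτ : Integrable τ μ) (hL : Integrable L μ) (hU : Integrable U μ)
    (e : Selection L U) : Integrable (fun x => ug * τ x + (ug - ul) * e.1 x - c) μ := by
  have he : Integrable e.1 μ := integrable_of_le_of_le e.2.1.aestronglyMeasurable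
    (.of_forall fun x => (e.2.2 x).1) (.of_forall fun x => (e.2.2 x).2) hL hU
  exact ((hτ.const_mul ug).add (he.const_mul (ug - ul))).sub (integrable_const c)

theorem iSup_integral_neg_mul_benefit (hLU : ∀ x, L x ≤ U x) (hτ : Integrable τ μ)
    (hL : Integrable L μ) (hU : Integrable U μ) (hLm : Measurable L) (hUm : Measurable U)
    (hw : AEStronglyMeasurable w μ) (hw01 : ∀ x, w x ∈ Icc 0 1) :
    ⨆ e : Selection L U, ∫ x, -(w x) * (ug * τ x + (ug - ul) * e.1 x - c) ∂μ
      = -∫ x, w x * Lb ug ul c τ L U x ∂μ := by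
  rw [← integral_neg]
  refine ciSup_integral_eq_of_ae_le
    (fun (e : Selection L U) x => -(w x) * (ug * τ x + (ug - ul) * e.1 x - c))
    (fun e => by
      simpa only [neg_mul, Pi.neg_def] using
        ((integrable_benefit hτ hL hU e).mul_of_mem_Icc hw hw01).neg)
    ⟨lbSelection ug ul L U, measurable_lbSelection hLm hUm,
      fun x => lbSelection_mem_Icc (hLU x)⟩
    ?_ fun e => .of_forall fun x => ?_
  · funext x; rw [Lb_eq (hLU x)]; ring
  · simp only [neg_mul, neg_le_neg_iff]
    exact mul_le_mul_of_nonneg_left (Lb_le (e.2.2 x)) (hw01 x).1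

theorem iSup_integral_mul_benefit (hLU : ∀ x, L x ≤ U x) (hτ : Integrable τ μ)
    (hL : Integrable L μ) (hU : Integrable U μ) (hLm : Measurable L) (hUm : Measurable U)
    (hw : AEStronglyMeasurable w μ) (hw01 : ∀ x, w x ∈ Icc 0 1) :
    ⨆ e : Selection L U, ∫ x, w x * (ug * τ x + (ug - ul) * e.1 x - c) ∂μ
      = ∫ x, w x * Ub ug ul c τ L U x ∂μ := by
  refine ciSup_integral_eq_of_ae_le _
    (fun e => (integrable_benefit hτ hL hU e).mul_of_mem_Icc hw hw01)
    ⟨ubSelection ug ul L U, measurable_ubSelection hLm hUm,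
      fun x => ubSelection_mem_Icc (hLU x)⟩
    ?_ fun e => .of_forall fun x => mul_le_mul_of_nonneg_left (le_Ub (e.2.2 x)) (hw01 x).1
  funext x; rw [Ub_eq (hLU x)]

end Regret

theorem stmt7_general {𝓧 : Type*} [MeasurableSpace 𝓧] (ν : Measure 𝓧) [IsProbabilityMeasure ν]
    (ug ul c : ℝ) (τ L U : 𝓧 → ℝ) (hLU : ∀ x, L x ≤ U x)
    (hτi : Integrable τ ν) (hLi : Integrable L ν) (hUi : Integrable U ν)
    (hLm : Measurable L) (hUm : Measurable U)
    (π : 𝓧 → ℝ) (hπm : Measurable π) (hπ : ∀ x, π x = 0 ∨ π x = 1)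
    (hLbi : Integrable (Lb ug ul c τ L U) ν) (hUbi : Integrable (Ub ug ul c τ L U) ν) :
    (⨆ e : {e : 𝓧 → ℝ // Measurable e ∧ ∀ x, e x ∈ Icc (L x) (U x)},
        ∫ x, -(π x) * (ug * τ x + (ug - ul) * e.1 x - c) ∂ν)
      = -∫ x, π x * Lb ug ul c τ L U x ∂ν ∧
    (⨆ e : {e : 𝓧 → ℝ // Measurable e ∧ ∀ x, e x ∈ Icc (L x) (U x)},
        ∫ x, (1 - π x) * (ug * τ x + (ug - ul) * e.1 x - c) ∂ν)
      = ∫ x, (1 - π x) * Ub ug ul c τ L U x ∂ν ∧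
    (∀ π' : 𝓧 → ℝ, Measurable π' → (∀ x, π' x = 0 ∨ π' x = 1) →
      -∫ x, (if 0 ≤ Lb ug ul c τ L U x then (1:ℝ) else 0) * Lb ug ul c τ L U x ∂ν
        ≤ -∫ x, π' x * Lb ug ul c τ L U x ∂ν) ∧
    (∀ π' : 𝓧 → ℝ, Measurable π' → (∀ x, π' x = 0 ∨ π' x = 1) →
      ∫ x, (1 - (if 0 ≤ Ub ug ul c τ L U x then (1:ℝ) else 0)) * Ub ug ul c τ L U x ∂ν
        ≤ ∫ x, (1 - π' x) * Ub ug ul c τ L U x ∂ν) := by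
  have mem_Icc_of_binary (p : 𝓧 → ℝ) (hp : ∀ x, p x = 0 ∨ p x = 1) (x : 𝓧) :
      p x ∈ Icc 0 1 := by
    rcases hp x with h | h <;> simp [h]
  have one_sub_mem_Icc (p : 𝓧 → ℝ) (hp : ∀ x, p x = 0 ∨ p x = 1) (x : 𝓧) :
      1 - p x ∈ Icc 0 1 :=
    Icc.mem_iff_one_sub_mem.1 (mem_Icc_of_binary p hp x)
  refine ⟨iSup_integral_neg_mul_benefit hLU hτi hLi hUi hLm hUm hπm.aestronglyMeasurable
      (mem_Icc_of_binary π hπ),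
    iSup_integral_mul_benefit hLU hτi hLi hUi hLm hUm
      (measurable_const.sub hπm).aestronglyMeasurable (one_sub_mem_Icc π hπ),
    fun π' hπ'm hπ' => ?_, fun π' hπ'm hπ' => ?_⟩
  · simp only [ite_nonneg_mul_self_eq_max_zero, neg_le_neg_iff]
    exact integral_mul_le_integral_max_zero hLbi hπ'm.aestronglyMeasurable
      (mem_Icc_of_binary π' hπ')
  · simp only [one_sub_ite_nonneg_mul_self_eq_min_zero]
    exact integral_min_zero_le_integral_mul hUbi
      (measurable_const.sub hπ'm).aestronglyMeasurable (one_sub_mem_Icc π' hπ')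

theorem stmt7 {𝓧 : Type*} [MeasurableSpace 𝓧] (ν : Measure 𝓧) [IsProbabilityMeasure ν]
    (ug ul c : ℝ) (τ L U : 𝓧 → ℝ) (hLU : ∀ x, L x ≤ U x)
    (hτi : Integrable τ ν) (hLi : Integrable L ν) (hUi : Integrable U ν)
    (hτm : Measurable τ) (hLm : Measurable L) (hUm : Measurable U)
    (π : 𝓧 → ℝ) (hπm : Measurable π) (hπ : ∀ x, π x = 0 ∨ π x = 1)
    (hLbi : Integrable (Lb ug ul c τ L U) ν) (hUbi : Integrable (Ub ug ul c τ L U) ν) :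
    (⨆ e : {e : 𝓧 → ℝ // Measurable e ∧ ∀ x, e x ∈ Icc (L x) (U x)},
        ∫ x, -(π x) * (ug * τ x + (ug - ul) * e.1 x - c) ∂ν)
      = -∫ x, π x * Lb ug ul c τ L U x ∂ν ∧
    (⨆ e : {e : 𝓧 → ℝ // Measurable e ∧ ∀ x, e x ∈ Icc (L x) (U x)},
        ∫ x, (1 - π x) * (ug * τ x + (ug - ul) * e.1 x - c) ∂ν)
      = ∫ x, (1 - π x) * Ub ug ul c τ L U x ∂ν ∧
    (∀ π' : 𝓧 → ℝ, Measurable π' → (∀ x, π' x = 0 ∨ π' x = 1) →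
      -∫ x, (if 0 ≤ Lb ug ul c τ L U x then (1:ℝ) else 0) * Lb ug ul c τ L U x ∂ν
        ≤ -∫ x, π' x * Lb ug ul c τ L U x ∂ν) ∧
    (∀ π' : 𝓧 → ℝ, Measurable π' → (∀ x, π' x = 0 ∨ π' x = 1) →
      ∫ x, (1 - (if 0 ≤ Ub ug ul c τ L U x then (1:ℝ) else 0)) * Ub ug ul c τ L U x ∂ν
        ≤ ∫ x, (1 - π' x) * Ub ug ul c τ L U x ∂ν) :=
  stmt7_general ν ug ul c τ L U hLU hτi hLi hUi hLm hUm π hπm hπ hLbi hUbi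
end

section
/- If u_g ≥ u_l, then U_b(x) = max_{e∈[L(x),U(x)]}(u_g τ(x) + (u_g-u_l)e - c) = (u_g - (u_g-u_l)δ_+(x))m(1,x) - (u_l + (u_g-u_l)δ_+(x))m(0,x) + (u_g-u_l)δ_+(x) - c, where U(x) = min{m(0,x), 1-m(1,x)} and δ_+(x) = 1{m(0,x)+m(1,x)-1 ≥ 0}. -/
/-!
The objective is affine in `e` with slope `u_g - u_l ≥ 0`, so its supremum over the nonempty
interval `[L, U]` is its value at `U = min m0 (1 - m1) = m0 + δ₊ (1 - m0 - m1)`.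
-/

theorem min_eq_add_ite_mul_sub {α : Type*} [Ring α] [LinearOrder α] (a b : α) :
    min a b = a + (if b ≤ a then 1 else 0) * (b - a) := by
  split_ifs with hba
  · rw [min_eq_right hba]; noncomm_ring
  · rw [min_eq_left (le_of_not_ge hba)]; noncomm_ring

theorem stmt9_general (ug ul c m0 m1 : ℝ) (h : ul ≤ ug)
    (hm0 : m0 ∈ Set.Icc (0:ℝ) 1) (hm1 : m1 ∈ Set.Icc (0:ℝ) 1) :
    sSup ((fun e => ug * (m1 - m0) + (ug - ul) * e - c) ''
        Set.Icc (max 0 (-(m1 - m0))) (min m0 (1 - m1)))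
      = (ug - (ug - ul) * (if 0 ≤ m0 + m1 - 1 then (1:ℝ) else 0)) * m1
        - (ul + (ug - ul) * (if 0 ≤ m0 + m1 - 1 then (1:ℝ) else 0)) * m0
        + (ug - ul) * (if 0 ≤ m0 + m1 - 1 then (1:ℝ) else 0) - c := by
  obtain ⟨hm0, hm0'⟩ := hm0
  obtain ⟨hm1, hm1'⟩ := hm1
  have hLU : max 0 (-(m1 - m0)) ≤ min m0 (1 - m1) :=
    max_le (le_min hm0 (by linarith)) (le_min (by linarith) (by linarith))
  have hmono : Monotone fun e => ug * (m1 - m0) + (ug - ul) * e - c := fun x y hxy => by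
    dsimp only
    gcongr
  have hδ : (1 - m1 ≤ m0) ↔ (0 ≤ m0 + m1 - 1) := by constructor <;> intro <;> linarith
  rw [(hmono.monotoneOn _).sSup_image_Icc hLU, min_eq_add_ite_mul_sub]
  simp only [hδ]
  ring

theorem stmt9 (ug ul c m0 m1 : ℝ) (h : ul ≤ ug) (hul : 0 < ul) (hc : 0 ≤ c)
    (hm0 : m0 ∈ Set.Icc (0:ℝ) 1) (hm1 : m1 ∈ Set.Icc (0:ℝ) 1) :
    sSup ((fun e => ug * (m1 - m0) + (ug - ul) * e - c) ''
        Set.Icc (max 0 (-(m1 - m0))) (min m0 (1 - m1)))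
      = (ug - (ug - ul) * (if 0 ≤ m0 + m1 - 1 then (1:ℝ) else 0)) * m1
        - (ul + (ug - ul) * (if 0 ≤ m0 + m1 - 1 then (1:ℝ) else 0)) * m0
        + (ug - ul) * (if 0 ≤ m0 + m1 - 1 then (1:ℝ) else 0) - c :=
  stmt9_general ug ul c m0 m1 h hm0 hm1
end

section
/- If u_g ≥ u_l, the policy minimizing the worst-case regret relative to the never-treat policy is the symmetric policy: π*_O(x) = 1{u_g τ(x) ≥ c}. If u_g < u_l, then π*_O(x) = 1{u_g m(1,x) ≥ u_l m(0,x) + c} when δ_+(x)=0, and π*_O(x) = 1{u_l m(1,x) ≥ u_g m(0,x) + u_l - u_g + c} when δ_+(x)=1. -/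
/-! The lower envelope `Lb x` is the infimum of an affine function of `e` over the Fréchet
interval, so it is attained at the left endpoint `L x` when `u_g ≥ u_l` and at the right endpoint
`U x` otherwise. Minimising `-∫ π Lb` over policies valued in `[0, 1]` is then done pointwise by
treating exactly where `Lb ≥ 0`, and evaluating the envelope at the relevant endpoint turns the
condition `0 ≤ Lb x` into the stated thresholds. -/

open MeasureTheory Set

lemma max_neg_sub_le_min_one_sub {p0 p1 : ℝ} (h0 : p0 ∈ Icc (0 : ℝ) 1) (h1 : p1 ∈ Icc (0 : ℝ) 1) :
    max 0 (-(p1 - p0)) ≤ min p0 (1 - p1) :=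
  max_le (le_min h0.1 (by linarith [h1.2])) (le_min (by linarith [h1.1]) (by linarith [h0.2]))

section Envelope

variable {α : Type*} {ug ul c : ℝ} {τ L U : α → ℝ} {x : α}

lemma Lb_eq_of_le (hgl : ul ≤ ug) (hLU : L x ≤ U x) :
    Lb ug ul c τ L U x = ug * τ x + (ug - ul) * L x - c :=
  MonotoneOn.sInf_image_Icc hLU fun _ _ _ _ hab => by
    have : 0 ≤ ug - ul := sub_nonneg.mpr hgl
    gcongr

lemma Lb_eq_of_ge (hgl : ug ≤ ul) (hLU : L x ≤ U x) :
    Lb ug ul c τ L U x = ug * τ x + (ug - ul) * U x - c :=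
  AntitoneOn.sInf_image_Icc hLU fun _ _ _ _ hab => by
    have : 0 ≤ ul - ug := sub_nonneg.mpr hgl
    nlinarith

end Envelope

section Thresholds

variable {ug ul c p0 p1 : ℝ}

lemma envelope_nonneg_iff_of_le (hul : 0 < ul) (hgl : ul ≤ ug) (hc : 0 ≤ c) (t : ℝ) :
    0 ≤ ug * t + (ug - ul) * max 0 (-t) - c ↔ c ≤ ug * t := by
  rcases le_total 0 t with ht | ht
  · rw [max_eq_left (by linarith)]
    constructor <;> intro <;> linarith
  · rw [max_eq_right (by linarith)]
    constructor <;> intro <;> nlinarith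

lemma envelope_nonneg_iff_of_add_lt_one (h : p0 + p1 < 1) :
    0 ≤ ug * (p1 - p0) + (ug - ul) * min p0 (1 - p1) - c ↔ ul * p0 + c ≤ ug * p1 := by
  rw [min_eq_left (by linarith)]
  constructor <;> intro <;> linarith

lemma envelope_nonneg_iff_of_one_le_add (h : 1 ≤ p0 + p1) :
    0 ≤ ug * (p1 - p0) + (ug - ul) * min p0 (1 - p1) - c ↔
      ug * p0 + (ul - ug) + c ≤ ul * p1 := by
  rw [min_eq_right (by linarith)]
  constructor <;> intro <;> linarith

end Thresholds

theorem integral_mul_le_integral_ite_nonneg_mul {X : Type*} [MeasurableSpace X] {μ : Measure X}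
    {π f : X → ℝ} (hπ : ∀ x, π x ∈ Icc (0 : ℝ) 1) (hπf : Integrable (fun x => π x * f x) μ)
    (hf : Integrable (fun x => (if 0 ≤ f x then 1 else 0) * f x) μ) :
    ∫ x, π x * f x ∂μ ≤ ∫ x, (if 0 ≤ f x then 1 else 0) * f x ∂μ := by
  refine integral_mono hπf hf fun x => ?_
  obtain ⟨h0, h1⟩ := hπ x
  dsimp only
  split_ifs <;> nlinarith

theorem stmt10_general {𝓧 : Type*} [MeasurableSpace 𝓧] (ν : Measure 𝓧)
    (ug ul c : ℝ) (hul : 0 < ul) (hc : 0 ≤ c)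
    (m0 m1 : 𝓧 → ℝ) (hm0 : ∀ x, m0 x ∈ Icc (0:ℝ) 1) (hm1 : ∀ x, m1 x ∈ Icc (0:ℝ) 1)
    (τ L U : 𝓧 → ℝ) (hτ : ∀ x, τ x = m1 x - m0 x)
    (hL : ∀ x, L x = max 0 (-τ x)) (hU : ∀ x, U x = min (m0 x) (1 - m1 x))
    (πstar : 𝓧 → ℝ)
    (hπstar : ∀ x, πstar x = if 0 ≤ Lb ug ul c τ L U x then 1 else 0)
    (hstarInt : Integrable (fun x => πstar x * Lb ug ul c τ L U x) ν) :
    (ul ≤ ug → ∀ x, πstar x = if c ≤ ug * τ x then 1 else 0) ∧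
    (ug < ul → ∀ x, πstar x =
      if m0 x + m1 x < 1 then (if ul * m0 x + c ≤ ug * m1 x then 1 else 0)
      else (if ug * m0 x + (ul - ug) + c ≤ ul * m1 x then 1 else 0)) ∧
    (∀ π : 𝓧 → ℝ, (∀ x, π x = 0 ∨ π x = 1) →
      Integrable (fun x => π x * Lb ug ul c τ L U x) ν →
      -∫ x, πstar x * Lb ug ul c τ L U x ∂ν ≤ -∫ x, π x * Lb ug ul c τ L U x ∂ν) := by
  have hLU : ∀ x, L x ≤ U x := fun x => by
    rw [hL, hU, hτ]
    exact max_neg_sub_le_min_one_sub (hm0 x) (hm1 x)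
  refine ⟨fun hgl x => ?_, fun hgl x => ?_, fun π hπ hπInt => ?_⟩
  · rw [hπstar, Lb_eq_of_le hgl (hLU x), hL]
    exact if_congr (envelope_nonneg_iff_of_le hul hgl hc (τ x)) rfl rfl
  · rw [hπstar, Lb_eq_of_ge hgl.le (hLU x), hU, hτ]
    by_cases hδ : m0 x + m1 x < 1
    · rw [if_pos hδ]
      exact if_congr (envelope_nonneg_iff_of_add_lt_one hδ) rfl rfl
    · rw [if_neg hδ]
      exact if_congr (envelope_nonneg_iff_of_one_le_add (not_lt.mp hδ)) rfl rfl
  · have hπ01 : ∀ x, π x ∈ Icc (0 : ℝ) 1 := fun x => by rcases hπ x with h | h <;> simp [h]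
    simp only [hπstar] at hstarInt ⊢
    exact neg_le_neg (integral_mul_le_integral_ite_nonneg_mul hπ01 hπInt hstarInt)

theorem stmt10 {𝓧 : Type*} [MeasurableSpace 𝓧] (ν : Measure 𝓧) [IsProbabilityMeasure ν]
    (ug ul c : ℝ) (hug : 0 < ug) (hul : 0 < ul) (hc : 0 ≤ c)
    (m0 m1 : 𝓧 → ℝ) (hm0 : ∀ x, m0 x ∈ Icc (0:ℝ) 1) (hm1 : ∀ x, m1 x ∈ Icc (0:ℝ) 1)
    (τ L U : 𝓧 → ℝ) (hτ : ∀ x, τ x = m1 x - m0 x)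
    (hL : ∀ x, L x = max 0 (-τ x)) (hU : ∀ x, U x = min (m0 x) (1 - m1 x))
    (πstar : 𝓧 → ℝ)
    (hπstar : ∀ x, πstar x = if 0 ≤ Lb ug ul c τ L U x then 1 else 0)
    (hstarInt : Integrable (fun x => πstar x * Lb ug ul c τ L U x) ν) :
    (ul ≤ ug → ∀ x, πstar x = if c ≤ ug * τ x then 1 else 0) ∧
    (ug < ul → ∀ x, πstar x =
      if m0 x + m1 x < 1 then (if ul * m0 x + c ≤ ug * m1 x then 1 else 0)
      else (if ug * m0 x + (ul - ug) + c ≤ ul * m1 x then 1 else 0)) ∧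
    (∀ π : 𝓧 → ℝ, (∀ x, π x = 0 ∨ π x = 1) →
      Integrable (fun x => π x * Lb ug ul c τ L U x) ν →
      -∫ x, πstar x * Lb ug ul c τ L U x ∂ν ≤ -∫ x, π x * Lb ug ul c τ L U x ∂ν) :=
  stmt10_general ν ug ul c hul hc m0 m1 hm0 hm1 τ L U hτ hL hU πstar hπstar hstarInt
end

section
/- If u_g < u_l, the policy minimizing the worst-case regret relative to the always-treat policy is the symmetric policy π*_1(x) = 1{u_g τ(x) ≥ c}. If u_g ≥ u_l, then π*_1(x) = 1{u_g m(1,x) ≥ u_l m(0,x)} when δ_+(x)=0 (with c=0 in the threshold), and π*_1(x) = 1{u_l m(1,x) ≥ u_g m(0,x) + u_l - u_g + c} when δ_+(x)=1. -/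
open MeasureTheory Set

theorem frechet_lower_le_upper {m0 m1 : ℝ} (h0 : m0 ∈ Icc (0:ℝ) 1) (h1 : m1 ∈ Icc (0:ℝ) 1) :
    max 0 (-(m1 - m0)) ≤ min m0 (1 - m1) := by
  obtain ⟨h0l, h0u⟩ := h0
  obtain ⟨h1l, h1u⟩ := h1
  exact le_min (max_le h0l (by linarith)) (max_le (by linarith) (by linarith))

section Ub

variable {α : Type*} {ug ul c : ℝ} {τ L U : α → ℝ} {x : α}

theorem Ub_eq_of_le (h : ul ≤ ug) (hx : L x ≤ U x) :
    Ub ug ul c τ L U x = ug * τ x + (ug - ul) * U x - c := by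
  have hmono : Monotone fun e => ug * τ x + (ug - ul) * e - c := fun a b hab => by
    have := sub_nonneg.2 h
    dsimp only
    gcongr
  exact (hmono.map_isGreatest (isGreatest_Icc hx)).csSup_eq

theorem Ub_eq_of_lt (h : ug < ul) (hx : L x ≤ U x) :
    Ub ug ul c τ L U x = ug * τ x + (ug - ul) * L x - c := by
  have hanti : Antitone fun e => ug * τ x + (ug - ul) * e - c := fun a b hab => by
    have := sub_nonpos.2 h.le
    dsimp only
    nlinarith
  exact (hanti.map_isLeast (isLeast_Icc hx)).csSup_eq

end Ub

theorem mul_add_sub_mul_max_neg_sub_nonneg_iff {ug ul c : ℝ} (hug : 0 < ug) (hul : 0 < ul)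
    (hc : 0 ≤ c) (t : ℝ) : 0 ≤ ug * t + (ug - ul) * max 0 (-t) - c ↔ c ≤ ug * t := by
  rcases le_or_gt 0 t with ht | ht
  · rw [max_eq_left (by linarith)]
    constructor <;> intro h <;> linarith
  · rw [max_eq_right (by linarith)]
    constructor <;> intro h <;> nlinarith

theorem one_sub_ite_nonneg_mul_le {p q b : ℝ} (hq : q = if 0 ≤ b then 1 else 0)
    (hp : p = 0 ∨ p = 1) : (1 - q) * b ≤ (1 - p) * b := by
  subst hq
  split_ifs with hb <;> rcases hp with rfl | rfl <;> simp only [sub_self, sub_zero] <;> linarith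

theorem stmt11_general {𝓧 : Type*} [MeasurableSpace 𝓧] (ν : Measure 𝓧)
    (ug ul c : ℝ) (hug : 0 < ug) (hul : 0 < ul) (hc : 0 ≤ c)
    (m0 m1 : 𝓧 → ℝ) (hm0 : ∀ x, m0 x ∈ Icc (0:ℝ) 1) (hm1 : ∀ x, m1 x ∈ Icc (0:ℝ) 1)
    (τ L U : 𝓧 → ℝ) (hτ : ∀ x, τ x = m1 x - m0 x)
    (hL : ∀ x, L x = max 0 (-τ x)) (hU : ∀ x, U x = min (m0 x) (1 - m1 x))
    (πstar : 𝓧 → ℝ)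
    (hπstar : ∀ x, πstar x = if 0 ≤ Ub ug ul c τ L U x then 1 else 0)
    (hstarInt : Integrable (fun x => (1 - πstar x) * Ub ug ul c τ L U x) ν) :
    (ug < ul → ∀ x, πstar x = if c ≤ ug * τ x then 1 else 0) ∧
    (ul ≤ ug → ∀ x,
      (m0 x + m1 x < 1 → c = 0 → πstar x = if ul * m0 x ≤ ug * m1 x then 1 else 0) ∧
      (1 ≤ m0 x + m1 x →
        πstar x = if ug * m0 x + (ul - ug) + c ≤ ul * m1 x then 1 else 0)) ∧
    (∀ π : 𝓧 → ℝ, (∀ x, π x = 0 ∨ π x = 1) →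
      Integrable (fun x => (1 - π x) * Ub ug ul c τ L U x) ν →
      ∫ x, (1 - πstar x) * Ub ug ul c τ L U x ∂ν
        ≤ ∫ x, (1 - π x) * Ub ug ul c τ L U x ∂ν) := by
  have hLU : ∀ x, L x ≤ U x := fun x => by
    rw [hL, hU, hτ]
    exact frechet_lower_le_upper (hm0 x) (hm1 x)
  refine ⟨fun hlt x => ?_, fun hle x => ⟨fun hsum hc0 => ?_, fun hsum => ?_⟩,
    fun π hπ hInt => integral_mono hstarInt hInt fun x => one_sub_ite_nonneg_mul_le (hπstar x) (hπ x)⟩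
  · rw [hπstar, Ub_eq_of_lt hlt (hLU x), hL]
    exact if_congr (mul_add_sub_mul_max_neg_sub_nonneg_iff hug hul hc (τ x)) rfl rfl
  · rw [hπstar, Ub_eq_of_le hle (hLU x), hU, hτ, min_eq_left (by linarith), hc0]
    exact if_congr (by constructor <;> intro h <;> linarith) rfl rfl
  · rw [hπstar, Ub_eq_of_le hle (hLU x), hU, hτ, min_eq_right (by linarith)]
    exact if_congr (by constructor <;> intro h <;> linarith) rfl rfl

theorem stmt11 {𝓧 : Type*} [MeasurableSpace 𝓧] (ν : Measure 𝓧) [IsProbabilityMeasure ν]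
    (ug ul c : ℝ) (hug : 0 < ug) (hul : 0 < ul) (hc : 0 ≤ c)
    (m0 m1 : 𝓧 → ℝ) (hm0 : ∀ x, m0 x ∈ Icc (0:ℝ) 1) (hm1 : ∀ x, m1 x ∈ Icc (0:ℝ) 1)
    (τ L U : 𝓧 → ℝ) (hτ : ∀ x, τ x = m1 x - m0 x)
    (hL : ∀ x, L x = max 0 (-τ x)) (hU : ∀ x, U x = min (m0 x) (1 - m1 x))
    (πstar : 𝓧 → ℝ)
    (hπstar : ∀ x, πstar x = if 0 ≤ Ub ug ul c τ L U x then 1 else 0)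
    (hstarInt : Integrable (fun x => (1 - πstar x) * Ub ug ul c τ L U x) ν) :
    (ug < ul → ∀ x, πstar x = if c ≤ ug * τ x then 1 else 0) ∧
    (ul ≤ ug → ∀ x,
      (m0 x + m1 x < 1 → c = 0 → πstar x = if ul * m0 x ≤ ug * m1 x then 1 else 0) ∧
      (1 ≤ m0 x + m1 x →
        πstar x = if ug * m0 x + (ul - ug) + c ≤ ul * m1 x then 1 else 0)) ∧
    (∀ π : 𝓧 → ℝ, (∀ x, π x = 0 ∨ π x = 1) →
      Integrable (fun x => (1 - π x) * Ub ug ul c τ L U x) ν →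
      ∫ x, (1 - πstar x) * Ub ug ul c τ L U x ∂ν
        ≤ ∫ x, (1 - π x) * Ub ug ul c τ L U x ∂ν) :=
  stmt11_general ν ug ul c hug hul hc m0 m1 hm0 hm1 τ L U hτ hL hU πstar hπstar hstarInt
end

section
/- The unconstrained minimizer of the worst-case regret relative to the oracle, π*_o = argmin_π E[sup_{b(X)∈[L_b(X),U_b(X)]}(π^o(X)-π(X))b(X)], is given pointwise by: π*_o(x) = 1 if L_b(x) ≥ 0; π*_o(x) = 0 if U_b(x) < 0; and π*_o(x) = 1{U_b(x) ≥ -L_b(x)} if L_b(x) < 0 ≤ U_b(x). -/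
/-! Since the regret `(1{b ≥ 0} - p) b` is `max b 0` for `p = 0` and `max (-b) 0` for `p = 1`,
the worst case over `b ∈ [L, U]` is `max U 0` for `p = 0` and `max (-L) 0` for `p = 1`. The
inner supremum thus only depends on `x`, and the integrated worst-case regret is minimised by
minimising pointwise, i.e. by taking `π x = 1` exactly when `max (-L) 0 ≤ max U 0`. -/

open MeasureTheory Set

lemma oracle_regret_of_zero (b : ℝ) : ((if 0 ≤ b then (1 : ℝ) else 0) - 0) * b = max b 0 := by
  split_ifs with hb
  · simp [hb]
  · rw [max_eq_right (by linarith)]; ring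

lemma oracle_regret_of_one (b : ℝ) : ((if 0 ≤ b then (1 : ℝ) else 0) - 1) * b = max (-b) 0 := by
  split_ifs with hb
  · simp [hb]
  · rw [max_eq_left (by linarith)]; ring

section Icc

variable {f : ℝ → ℝ} {a b : ℝ}

lemma sSup_setOf_Icc_of_monotone (hf : Monotone f) (hab : a ≤ b) :
    sSup {r | ∃ x ∈ Icc a b, r = f x} = f b := by
  simpa only [image, eq_comm] using (hf.map_isGreatest (isGreatest_Icc hab)).csSup_eq

lemma sSup_setOf_Icc_of_antitone (hf : Antitone f) (hab : a ≤ b) :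
    sSup {r | ∃ x ∈ Icc a b, r = f x} = f a := by
  simpa only [image, eq_comm] using (hf.map_isLeast (isLeast_Icc hab)).csSup_eq

end Icc

noncomputable def worstRegret (L U p : ℝ) : ℝ := if p = 1 then max (-L) 0 else max U 0

noncomputable def minimaxChoice (L U : ℝ) : ℝ :=
  if 0 ≤ L then 1 else if U < 0 then 0 else if -L ≤ U then 1 else 0

section Pointwise

variable {L U p : ℝ}

lemma sSup_oracle_regret (hLU : L ≤ U) (hp : p = 0 ∨ p = 1) :
    sSup {r : ℝ | ∃ b ∈ Icc L U, r = ((if 0 ≤ b then (1 : ℝ) else 0) - p) * b} =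
      worstRegret L U p := by
  rcases hp with rfl | rfl
  · simp only [oracle_regret_of_zero, worstRegret, zero_ne_one, if_false]
    exact sSup_setOf_Icc_of_monotone (fun _ _ h => max_le_max_right 0 h) hLU
  · simp only [oracle_regret_of_one, worstRegret, if_true]
    exact sSup_setOf_Icc_of_antitone (fun _ _ h => max_le_max_right 0 (neg_le_neg h)) hLU

lemma minimaxChoice_eq_zero_or_one (L U : ℝ) : minimaxChoice L U = 0 ∨ minimaxChoice L U = 1 := by
  unfold minimaxChoice
  split_ifs <;> simp

lemma worstRegret_minimaxChoice (hLU : L ≤ U) :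
    worstRegret L U (minimaxChoice L U) = min (max (-L) 0) (max U 0) := by
  unfold worstRegret minimaxChoice
  split_ifs <;> grind

lemma worstRegret_minimaxChoice_le (hLU : L ≤ U) (hp : p = 0 ∨ p = 1) :
    worstRegret L U (minimaxChoice L U) ≤ worstRegret L U p := by
  rw [worstRegret_minimaxChoice hLU]
  rcases hp with rfl | rfl
  · rw [worstRegret, if_neg zero_ne_one]; exact min_le_right _ _
  · rw [worstRegret, if_pos rfl]; exact min_le_left _ _

end Pointwise

theorem stmt14_general {𝓧 : Type*} [MeasurableSpace 𝓧] (ν : Measure 𝓧)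
    (Lb Ub : 𝓧 → ℝ) (hLU : ∀ x, Lb x ≤ Ub x)
    (WR : (𝓧 → ℝ) → 𝓧 → ℝ)
    (hWR : ∀ π x, WR π x = sSup {r : ℝ | ∃ b ∈ Set.Icc (Lb x) (Ub x),
        r = ((if 0 ≤ b then (1:ℝ) else 0) - π x) * b})
    (πstar : 𝓧 → ℝ)
    (hπstar : ∀ x, πstar x =
      if 0 ≤ Lb x then 1 else if Ub x < 0 then 0 else (if -Lb x ≤ Ub x then 1 else 0))
    (hstarInt : Integrable (WR πstar) ν) :
    (∀ x, 0 ≤ Lb x → πstar x = 1) ∧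
    (∀ x, Ub x < 0 → πstar x = 0) ∧
    (∀ x, Lb x < 0 → 0 ≤ Ub x → πstar x = if -Lb x ≤ Ub x then 1 else 0) ∧
    (∀ π : 𝓧 → ℝ, (∀ x, π x = 0 ∨ π x = 1) → Integrable (WR π) ν →
      ∫ x, WR πstar x ∂ν ≤ ∫ x, WR π x ∂ν) := by
  have hπstar_eq (x : 𝓧) : πstar x = minimaxChoice (Lb x) (Ub x) := hπstar x
  have hWR_eq (π : 𝓧 → ℝ) (x : 𝓧) (hπ : π x = 0 ∨ π x = 1) :
      WR π x = worstRegret (Lb x) (Ub x) (π x) := by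
    rw [hWR, sSup_oracle_regret (hLU x) hπ]
  refine ⟨fun x hL => by simp [hπstar, hL], fun x hU => ?_, fun x hL hU => ?_,
    fun π hπ hInt => integral_mono hstarInt hInt fun x => ?_⟩
  · simp [hπstar, hU, (hLU x).trans_lt hU]
  · rw [hπstar, if_neg hL.not_ge, if_neg hU.not_gt]
  · rw [hWR_eq π x (hπ x), hWR_eq πstar x (hπstar_eq x ▸ minimaxChoice_eq_zero_or_one _ _), hπstar_eq]
    exact worstRegret_minimaxChoice_le (hLU x) (hπ x)

theorem stmt14 {𝓧 : Type*} [MeasurableSpace 𝓧] (ν : Measure 𝓧) [IsProbabilityMeasure ν]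
    (Lb Ub : 𝓧 → ℝ) (hLU : ∀ x, Lb x ≤ Ub x)
    (hbdd : ∃ M : ℝ, ∀ x, |Lb x| ≤ M ∧ |Ub x| ≤ M)
    (WR : (𝓧 → ℝ) → 𝓧 → ℝ)
    (hWR : ∀ π x, WR π x = sSup {r : ℝ | ∃ b ∈ Set.Icc (Lb x) (Ub x),
        r = ((if 0 ≤ b then (1:ℝ) else 0) - π x) * b})
    (πstar : 𝓧 → ℝ)
    (hπstar : ∀ x, πstar x =
      if 0 ≤ Lb x then 1 else if Ub x < 0 then 0 else (if -Lb x ≤ Ub x then 1 else 0))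
    (hstarInt : Integrable (WR πstar) ν) :
    (∀ x, 0 ≤ Lb x → πstar x = 1) ∧
    (∀ x, Ub x < 0 → πstar x = 0) ∧
    (∀ x, Lb x < 0 → 0 ≤ Ub x → πstar x = if -Lb x ≤ Ub x then 1 else 0) ∧
    (∀ π : 𝓧 → ℝ, (∀ x, π x = 0 ∨ π x = 1) → Integrable (WR π) ν →
      ∫ x, WR πstar x ∂ν ≤ ∫ x, WR π x ∂ν) :=
  stmt14_general ν Lb Ub hLU WR hWR πstar hπstar hstarInt
end

section
/- With c = 0 and u_g ≥ u_l, in the intermediate region where δ_τ(x) = 0 and π*_1(x) = 1, the minimax-regret policy relative to the oracle treats if and only if: (u_g+u_l) m(1,x) ≥ 2u_l m(0,x) when δ_+(x) = 0, and 2u_l m(1,x) ≥ (u_g+u_l) m(0,x) + (u_l - u_g) when δ_+(x) = 1. This follows from the condition U_b(x) ≥ -L_b(x) with the explicit formulas for L_b and U_b. -/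
theorem stmt15_general (ug ul m0 m1 : ℝ)
    (τ δτ δp Lb Ub : ℝ) (hτ : τ = m1 - m0)
    (hδp : δp = if 1 ≤ m0 + m1 then 1 else 0)
    (hLb : Lb = (ul + (ug - ul) * δτ) * τ)
    (hUb : Ub = (ug - (ug - ul) * δp) * m1 - (ul + (ug - ul) * δp) * m0 + (ug - ul) * δp)
    (hneg : δτ = 0) :
    (m0 + m1 < 1 → ((-Lb ≤ Ub) ↔ 2 * ul * m0 ≤ (ug + ul) * m1)) ∧
    (1 ≤ m0 + m1 → ((-Lb ≤ Ub) ↔ (ug + ul) * m0 + (ul - ug) ≤ 2 * ul * m1)) := by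
  subst hτ hδp hLb hUb hneg
  refine ⟨fun hlt => ?_, fun hge => ?_⟩
  · rw [if_neg hlt.not_ge]
    constructor <;> intro <;> linarith
  · rw [if_pos hge]
    constructor <;> intro <;> linarith

theorem stmt15 (ug ul m0 m1 : ℝ) (h : ul ≤ ug) (hul : 0 < ul)
    (hm0 : m0 ∈ Set.Icc (0:ℝ) 1) (hm1 : m1 ∈ Set.Icc (0:ℝ) 1)
    (τ δτ δp Lb Ub : ℝ) (hτ : τ = m1 - m0)
    (hδτ : δτ = if 0 ≤ τ then 1 else 0)
    (hδp : δp = if 1 ≤ m0 + m1 then 1 else 0)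
    (hLb : Lb = (ul + (ug - ul) * δτ) * τ)
    (hUb : Ub = (ug - (ug - ul) * δp) * m1 - (ul + (ug - ul) * δp) * m0 + (ug - ul) * δp)
    (hneg : δτ = 0) (hint : 0 ≤ Ub) :
    (m0 + m1 < 1 → ((-Lb ≤ Ub) ↔ 2 * ul * m0 ≤ (ug + ul) * m1)) ∧
    (1 ≤ m0 + m1 → ((-Lb ≤ Ub) ↔ (ug + ul) * m0 + (ul - ug) ≤ 2 * ul * m1)) :=
  stmt15_general ug ul m0 m1 τ δτ δp Lb Ub hτ hδp hLb hUb hneg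
end

section
/- The worst-case (over principal scores in the Fréchet interval) probability that policy π gives a harmful treatment is sup P(Y(π(X))<Y(0)) = E[π(X)(m(0,X) + δ_+(X)(1 - m(1,X) - m(0,X)))], and the worst-case probability of failing to give a useful treatment is sup P(Y(π(X))<Y(1)) = E[(1-π(X))(m(1,X) + δ_+(X)(1 - m(1,X) - m(0,X)))]. -/
/-!
Both integrands are pointwise nondecreasing in the principal score `e₀₁` and nonnegative on the
Fréchet interval, so each supremum is attained at the upper Fréchet bound `U = min m₀ (1 - m₁)`,
which is admissible because the lower bound `max 0 (-τ)` never exceeds it. Splitting on the sign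
of `m₀ + m₁ - 1` gives `U = m₀ + δ₊ (1 - m₀ - m₁)` and `τ + U = min m₁ (1 - m₀)
= m₁ + δ₊ (1 - m₀ - m₁)`.
-/

open MeasureTheory Set

theorem ciSup_integral_eq_of_forall_le {α ι : Type*} [MeasurableSpace α] {μ : Measure α}
    {F : ι → α → ℝ} (i₀ : ι) (hi₀ : Integrable (F i₀) μ)
    (hnonneg : ∀ i, 0 ≤ᵐ[μ] F i) (hle : ∀ i, F i ≤ᵐ[μ] F i₀) :
    ⨆ i, ∫ x, F i x ∂μ = ∫ x, F i₀ x ∂μ := by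
  have : Nonempty ι := ⟨i₀⟩
  have hbound : ∀ i, ∫ x, F i x ∂μ ≤ ∫ x, F i₀ x ∂μ := fun i =>
    integral_mono_of_nonneg (hnonneg i) hi₀ (hle i)
  exact le_antisymm (ciSup_le hbound) (le_ciSup ⟨_, forall_mem_range.2 hbound⟩ i₀)

theorem integrable_of_forall_mem_unitInterval {α : Type*} [MeasurableSpace α] {μ : Measure α}
    [IsFiniteMeasure μ] {f : α → ℝ} (hf : Measurable f) (h01 : ∀ x, f x ∈ unitInterval) :
    Integrable f μ :=
  .of_bound hf.aestronglyMeasurable 1 <| ae_of_all _ fun x => by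
    rw [Real.norm_of_nonneg (h01 x).1]; exact (h01 x).2

theorem min_one_sub_eq_add_ite_mul (a b : ℝ) :
    min a (1 - b) = a + (if 0 ≤ a + b - 1 then 1 else 0) * (1 - b - a) := by
  split_ifs with h
  · rw [min_eq_right (by linarith)]; ring
  · rw [min_eq_left (by linarith)]; ring

theorem sub_add_min_one_sub (a b : ℝ) : b - a + min a (1 - b) = min b (1 - a) := by
  rw [← min_add_add_left]; ring_nf

section PrincipalScore

variable {𝓧 : Type*} [MeasurableSpace 𝓧] {m0 m1 : 𝓧 → ℝ}

/-- Measurable principal scores `e₀₁` in the Fréchet interval of the potential-outcome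
probabilities `m0 = P(Y(0) = 1 | X)` and `m1 = P(Y(1) = 1 | X)`. -/
abbrev PrincipalScore (m0 m1 : 𝓧 → ℝ) : Type _ :=
  {e : 𝓧 → ℝ // Measurable e ∧
    ∀ x, e x ∈ Icc (max 0 (-(m1 x - m0 x))) (min (m0 x) (1 - m1 x))}

theorem PrincipalScore.nonneg (e : PrincipalScore m0 m1) (x : 𝓧) : 0 ≤ e.1 x :=
  (le_max_left _ _).trans (e.2.2 x).1

theorem PrincipalScore.sub_add_nonneg (e : PrincipalScore m0 m1) (x : 𝓧) :
    0 ≤ m1 x - m0 x + e.1 x := by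
  linarith [(le_max_right _ _).trans (e.2.2 x).1]

def PrincipalScore.upper (hm0m : Measurable m0) (hm1m : Measurable m1)
    (hm0 : ∀ x, m0 x ∈ Icc (0 : ℝ) 1) (hm1 : ∀ x, m1 x ∈ Icc (0 : ℝ) 1) :
    PrincipalScore m0 m1 :=
  ⟨fun x => min (m0 x) (1 - m1 x), hm0m.min (measurable_const.sub hm1m), fun x =>
    ⟨max_le (le_min (hm0 x).1 (by linarith [(hm1 x).2]))
      (le_min (by linarith [(hm1 x).1]) (by linarith [(hm0 x).2])), le_rfl⟩⟩

variable (ν : Measure 𝓧) [IsFiniteMeasure ν] (hm0m : Measurable m0) (hm1m : Measurable m1)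
  (hm0 : ∀ x, m0 x ∈ Icc (0 : ℝ) 1) (hm1 : ∀ x, m1 x ∈ Icc (0 : ℝ) 1)
  {w : 𝓧 → ℝ} (hwm : Measurable w) (hw : ∀ x, w x ∈ unitInterval)
include hm0m hm1m hm0 hm1 hwm hw

theorem ciSup_integral_mul_principalScore :
    ⨆ e : PrincipalScore m0 m1, ∫ x, w x * e.1 x ∂ν = ∫ x, w x * min (m0 x) (1 - m1 x) ∂ν := by
  set eU := PrincipalScore.upper hm0m hm1m hm0 hm1
  have hint : Integrable (fun x => w x * eU.1 x) ν :=
    integrable_of_forall_mem_unitInterval (hwm.mul eU.2.1) fun x =>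
      unitInterval.mul_mem (hw x) ⟨eU.nonneg x, (min_le_left _ _).trans (hm0 x).2⟩
  exact ciSup_integral_eq_of_forall_le (F := fun e x => w x * e.1 x) eU hint
    (fun e => ae_of_all _ fun x => mul_nonneg (hw x).1 (e.nonneg x))
    (fun e => ae_of_all _ fun x => mul_le_mul_of_nonneg_left (e.2.2 x).2 (hw x).1)

theorem ciSup_integral_mul_sub_add_principalScore :
    ⨆ e : PrincipalScore m0 m1, ∫ x, w x * (m1 x - m0 x + e.1 x) ∂ν
      = ∫ x, w x * min (m1 x) (1 - m0 x) ∂ν := by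
  set eU := PrincipalScore.upper hm0m hm1m hm0 hm1
  have hint : Integrable (fun x => w x * (m1 x - m0 x + eU.1 x)) ν :=
    integrable_of_forall_mem_unitInterval (hwm.mul ((hm1m.sub hm0m).add eU.2.1)) fun x =>
      unitInterval.mul_mem (hw x) ⟨eU.sub_add_nonneg x,
        (sub_add_min_one_sub (m0 x) (m1 x)).trans_le ((min_le_left _ _).trans (hm1 x).2)⟩
  simp_rw [← sub_add_min_one_sub (m0 _) (m1 _)]
  exact ciSup_integral_eq_of_forall_le (F := fun e x => w x * (m1 x - m0 x + e.1 x)) eU hint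
    (fun e => ae_of_all _ fun x => mul_nonneg (hw x).1 (e.sub_add_nonneg x))
    (fun e => ae_of_all _ fun x =>
      mul_le_mul_of_nonneg_left (add_le_add_right (e.2.2 x).2 _) (hw x).1)

end PrincipalScore

theorem stmt17_general {𝓧 : Type*} [MeasurableSpace 𝓧] (ν : Measure 𝓧) [IsProbabilityMeasure ν]
    (m0 m1 : 𝓧 → ℝ) (hm0m : Measurable m0) (hm1m : Measurable m1)
    (hm0 : ∀ x, m0 x ∈ Icc (0:ℝ) 1) (hm1 : ∀ x, m1 x ∈ Icc (0:ℝ) 1)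
    (τ δp : 𝓧 → ℝ) (hτ : ∀ x, τ x = m1 x - m0 x)
    (hδp : ∀ x, δp x = if 0 ≤ m0 x + m1 x - 1 then 1 else 0)
    (π : 𝓧 → ℝ) (hπm : Measurable π) (hπ : ∀ x, π x = 0 ∨ π x = 1) :
    (⨆ e : {e : 𝓧 → ℝ // Measurable e ∧ ∀ x,
        e x ∈ Icc (max 0 (-τ x)) (min (m0 x) (1 - m1 x))},
      ∫ x, π x * e.1 x ∂ν)
      = ∫ x, π x * (m0 x + δp x * (1 - m1 x - m0 x)) ∂ν ∧
    (⨆ e : {e : 𝓧 → ℝ // Measurable e ∧ ∀ x,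
        e x ∈ Icc (max 0 (-τ x)) (min (m0 x) (1 - m1 x))},
      ∫ x, (1 - π x) * (τ x + e.1 x) ∂ν)
      = ∫ x, (1 - π x) * (m1 x + δp x * (1 - m1 x - m0 x)) ∂ν := by
  obtain rfl : τ = fun x => m1 x - m0 x := funext hτ
  have hπ01 (x : 𝓧) : π x ∈ unitInterval := by rcases hπ x with h | h <;> simp [h]
  have hU (x : 𝓧) : m0 x + δp x * (1 - m1 x - m0 x) = min (m0 x) (1 - m1 x) := by
    rw [hδp, min_one_sub_eq_add_ite_mul]
  have hτU (x : 𝓧) : m1 x + δp x * (1 - m1 x - m0 x) = min (m1 x) (1 - m0 x) := by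
    rw [hδp, min_one_sub_eq_add_ite_mul, add_comm (m0 x) (m1 x), sub_right_comm]
  constructor
  · simp_rw [hU]
    exact ciSup_integral_mul_principalScore ν hm0m hm1m hm0 hm1 hπm hπ01
  · simp_rw [hτU]
    exact ciSup_integral_mul_sub_add_principalScore ν hm0m hm1m hm0 hm1
      (measurable_const.sub hπm) fun x => Icc.mem_iff_one_sub_mem.mp (hπ01 x)

theorem stmt17 {𝓧 : Type*} [MeasurableSpace 𝓧] (ν : Measure 𝓧) [IsProbabilityMeasure ν]
    (m0 m1 : 𝓧 → ℝ) (hm0m : Measurable m0) (hm1m : Measurable m1)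
    (hm0 : ∀ x, m0 x ∈ Icc (0:ℝ) 1) (hm1 : ∀ x, m1 x ∈ Icc (0:ℝ) 1)
    (hm0i : Integrable m0 ν) (hm1i : Integrable m1 ν)
    (τ δp : 𝓧 → ℝ) (hτ : ∀ x, τ x = m1 x - m0 x)
    (hδp : ∀ x, δp x = if 0 ≤ m0 x + m1 x - 1 then 1 else 0)
    (π : 𝓧 → ℝ) (hπm : Measurable π) (hπ : ∀ x, π x = 0 ∨ π x = 1) :
    (⨆ e : {e : 𝓧 → ℝ // Measurable e ∧ ∀ x,
        e x ∈ Icc (max 0 (-τ x)) (min (m0 x) (1 - m1 x))},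
      ∫ x, π x * e.1 x ∂ν)
      = ∫ x, π x * (m0 x + δp x * (1 - m1 x - m0 x)) ∂ν ∧
    (⨆ e : {e : 𝓧 → ℝ // Measurable e ∧ ∀ x,
        e x ∈ Icc (max 0 (-τ x)) (min (m0 x) (1 - m1 x))},
      ∫ x, (1 - π x) * (τ x + e.1 x) ∂ν)
      = ∫ x, (1 - π x) * (m1 x + δp x * (1 - m1 x - m0 x)) ∂ν :=
  stmt17_general ν m0 m1 hm0m hm1m hm0 hm1 τ δp hτ hδp π hπm hπ
end
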